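/- The Lie algebra 𝔧 admits a grading 𝔧 = 𝔧₁ ⊕ 𝔧₂ ⊕ 𝔧₃ with 𝔧₁ = span{X₁, X₂, Y₂₀, Y₁₁, Y₀₂}, 𝔧₂ = span{Y₁₀, Y₀₁}, 𝔧₃ = span{Y}, satisfying [𝔧₁, 𝔧₁] ⊆ 𝔧₂, [𝔧₁, 𝔧₂] ⊆ 𝔧₃, [𝔧₁, 𝔧₃] = 0, and moreover [𝔧₁, 𝔧₁] = 𝔧₂ and [𝔧₁, 𝔧₂] = 𝔧₃ (so 𝔧 is stratified with growth vector (5,7,8)). -/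

import Mathlib

/-!
Grading by the layer of the basis vectors (`X₁, X₂, Y₂₀, Y₁₁, Y₀₂` in layer one, `Y₁₀, Y₀₁` in
layer two, `Y` in layer three) splits `𝔧` into a direct sum, because the layers partition a basis.
Since the bracket is bilinear, `[span s, span t]` is spanned by the brackets of generators, so the
bracket relations reduce to the structure constants: brackets of layer-one generators are `±Y₁₀`,
`±Y₀₁` or `0`, and both occur (`[X₁, Y₂₀] = Y₁₀`, `[X₁, Y₁₁] = Y₀₁`); brackets of layer one with
layer two are `Y` or `0`, with `[X₁, Y₁₀] = Y`; and `Y` is central.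
-/

open Submodule Set

namespace Module.Basis

variable {ι κ R M : Type*} [Ring R] [AddCommGroup M] [Module R M]

theorem iSupIndep_span_image_preimage (b : Basis ι R M) (f : ι → κ) :
    iSupIndep fun k => span R (b '' (f ⁻¹' {k})) := by
  intro k
  refine (b.linearIndependent.disjoint_span_image disjoint_compl_right).mono_right ?_
  refine iSup₂_le fun j hj => span_mono (image_mono fun i hi => ?_)
  simp_all

theorem iSup_span_image_preimage (b : Basis ι R M) (f : ι → κ) :
    ⨆ k, span R (b '' (f ⁻¹' {k})) = ⊤ := by
  refine eq_top_iff.2 (b.span_eq.symm.le.trans (span_le.2 ?_))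
  rintro _ ⟨i, rfl⟩
  exact mem_iSup_of_mem (f i) (subset_span ⟨i, rfl, rfl⟩)

theorem isInternal_span_image_preimage [DecidableEq κ] (b : Basis ι R M) (f : ι → κ) :
    DirectSum.IsInternal fun k => span R (b '' (f ⁻¹' {k})) :=
  DirectSum.isInternal_submodule_of_iSupIndep_of_iSup_eq_top
    (b.iSupIndep_span_image_preimage f) (b.iSup_span_image_preimage f)

end Module.Basis

theorem LieAlgebra.span_lie_span_span {R L : Type*} [CommRing R] [LieRing L] [LieAlgebra R L]
    (s t : Set L) :
    span R {z | ∃ u ∈ span R s, ∃ v ∈ span R t, z = ⁅u, v⁆} =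
      span R (image2 (fun x y => ⁅x, y⁆) s t) := by
  have h := map₂_span_span R (LieAlgebra.ad R L : L →ₗ[R] Module.End R L) s t
  rw [map₂_eq_span_image2] at h
  convert h using 2 <;> ext <;> simp [eq_comm]

theorem LieAlgebra.lie_mem_span_image2 {R L : Type*} [CommRing R] [LieRing L] [LieAlgebra R L]
    {s t : Set L} {u v : L} (hu : u ∈ span R s) (hv : v ∈ span R t) :
    ⁅u, v⁆ ∈ span R (image2 (fun x y => ⁅x, y⁆) s t) :=
  span_lie_span_span (R := R) s t ▸ subset_span ⟨u, hu, v, hv, rfl⟩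

def JBrackets {L : Type*} [LieRing L] [LieAlgebra ℝ L] (b : Module.Basis (Fin 8) ℝ L) : Prop :=
  ∀ i j : Fin 8, ⁅b i, b j⁆ =
    if i = 0 ∧ j = 2 ∨ i = 1 ∧ j = 3 then b 5
    else if i = 2 ∧ j = 0 ∨ i = 3 ∧ j = 1 then -b 5
    else if i = 0 ∧ j = 3 ∨ i = 1 ∧ j = 4 then b 6
    else if i = 3 ∧ j = 0 ∨ i = 4 ∧ j = 1 then -b 6
    else if i = 0 ∧ j = 5 ∨ i = 1 ∧ j = 6 then b 7
    else if i = 5 ∧ j = 0 ∨ i = 6 ∧ j = 1 then -b 7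
    else 0

namespace JBrackets

variable {L : Type*} [LieRing L] [LieAlgebra ℝ L] {b : Module.Basis (Fin 8) ℝ L}

theorem span_lie_layer_one_one (hb : JBrackets b) :
    span ℝ (image2 (fun x y => ⁅x, y⁆) {b 0, b 1, b 2, b 3, b 4} {b 0, b 1, b 2, b 3, b 4}) =
      span ℝ {b 5, b 6} := by
  refine span_eq_span ?_ ?_
  · simp only [image2_subset_iff, forall_mem_insert]
    simp [hb _ _, mem_span_of_mem]
  · simp only [insert_subset_iff, singleton_subset_iff]
    exact ⟨subset_span ⟨b 0, by simp, b 2, by simp, by simp [hb _ _]⟩,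
      subset_span ⟨b 0, by simp, b 3, by simp, by simp [hb _ _]⟩⟩

theorem span_lie_layer_one_two (hb : JBrackets b) :
    span ℝ (image2 (fun x y => ⁅x, y⁆) {b 0, b 1, b 2, b 3, b 4} {b 5, b 6}) =
      span ℝ {b 7} := by
  refine span_eq_span ?_ ?_
  · simp only [image2_subset_iff, forall_mem_insert]
    simp [hb _ _, mem_span_of_mem]
  · exact singleton_subset_iff.2 (subset_span ⟨b 0, by simp, b 5, by simp, by simp [hb _ _]⟩)

theorem span_lie_layer_one_three (hb : JBrackets b) :
    span ℝ (image2 (fun x y => ⁅x, y⁆) {b 0, b 1, b 2, b 3, b 4} {b 7}) = ⊥ := by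
  simp only [span_eq_bot, forall_mem_image2, forall_mem_insert]
  simp [hb _ _]

end JBrackets

def jLayer : Fin 8 → Fin 3 := ![0, 0, 0, 0, 0, 1, 1, 2]

theorem jLayer_preimage_zero : jLayer ⁻¹' {0} = {0, 1, 2, 3, 4} := by
  ext i; fin_cases i <;> simp [jLayer]

theorem jLayer_preimage_one : jLayer ⁻¹' {1} = {5, 6} := by
  ext i; fin_cases i <;> simp [jLayer]

theorem jLayer_preimage_two : jLayer ⁻¹' {2} = {7} := by
  ext i; fin_cases i <;> simp [jLayer]

/-- The Lie algebra `𝔧` (basis `X₁, X₂, Y₂₀, Y₁₁, Y₀₂, Y₁₀, Y₀₁, Y`, indexed `0,…,7`,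
with the Carnot brackets) admits the stratification `𝔧 = 𝔧₁ ⊕ 𝔧₂ ⊕ 𝔧₃` with
`𝔧₁ = span{X₁,X₂,Y₂₀,Y₁₁,Y₀₂}`, `𝔧₂ = span{Y₁₀,Y₀₁}`, `𝔧₃ = span{Y}`, satisfying
`[𝔧₁,𝔧₁] = 𝔧₂`, `[𝔧₁,𝔧₂] = 𝔧₃`, `[𝔧₁,𝔧₃] = 0` (growth vector `(5,7,8)`). -/
theorem stmt5 (L : Type*) [LieRing L] [LieAlgebra ℝ L] (b : Module.Basis (Fin 8) ℝ L)
    (hbr : ∀ i j : Fin 8, ⁅b i, b j⁆ =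
      if i = 0 ∧ j = 2 ∨ i = 1 ∧ j = 3 then b 5
      else if i = 2 ∧ j = 0 ∨ i = 3 ∧ j = 1 then -b 5
      else if i = 0 ∧ j = 3 ∨ i = 1 ∧ j = 4 then b 6
      else if i = 3 ∧ j = 0 ∨ i = 4 ∧ j = 1 then -b 6
      else if i = 0 ∧ j = 5 ∨ i = 1 ∧ j = 6 then b 7
      else if i = 5 ∧ j = 0 ∨ i = 6 ∧ j = 1 then -b 7
      else 0)
    (J1 J2 J3 : Submodule ℝ L)
    (hJ1 : J1 = Submodule.span ℝ {b 0, b 1, b 2, b 3, b 4})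
    (hJ2 : J2 = Submodule.span ℝ {b 5, b 6})
    (hJ3 : J3 = Submodule.span ℝ {b 7}) :
    -- direct sum decomposition 𝔧 = 𝔧₁ ⊕ 𝔧₂ ⊕ 𝔧₃
    DirectSum.IsInternal ![J1, J2, J3] ∧
    -- [𝔧₁, 𝔧₁] = 𝔧₂
    Submodule.span ℝ {z : L | ∃ u ∈ J1, ∃ v ∈ J1, z = ⁅u, v⁆} = J2 ∧
    -- [𝔧₁, 𝔧₂] = 𝔧₃
    Submodule.span ℝ {z : L | ∃ u ∈ J1, ∃ v ∈ J2, z = ⁅u, v⁆} = J3 ∧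
    -- [𝔧₁, 𝔧₃] = 0
    (∀ u ∈ J1, ∀ v ∈ J3, ⁅u, v⁆ = 0) ∧
    -- together the three layers span 𝔧
    J1 ⊔ J2 ⊔ J3 = ⊤ := by
  have hb : JBrackets b := hbr
  subst hJ1 hJ2 hJ3
  have hlayers : ![span ℝ {b 0, b 1, b 2, b 3, b 4}, span ℝ {b 5, b 6}, span ℝ {b 7}] =
      fun k => span ℝ (b '' (jLayer ⁻¹' {k})) := by
    funext k
    fin_cases k <;>
      simp [jLayer_preimage_zero, jLayer_preimage_one, jLayer_preimage_two, image_insert_eq]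
  have hinternal := hlayers ▸ b.isInternal_span_image_preimage jLayer
  refine ⟨hinternal, ?_, ?_, fun u hu v hv => ?_, ?_⟩
  · rw [LieAlgebra.span_lie_span_span, hb.span_lie_layer_one_one]
  · rw [LieAlgebra.span_lie_span_span, hb.span_lie_layer_one_two]
  · have h := LieAlgebra.lie_mem_span_image2 hu hv
    rwa [hb.span_lie_layer_one_three, mem_bot] at h
  · simpa [iSup_fin_three] using hinternal.submodule_iSup_eq_top
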